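/- Let n ≥ 4 and 2 ≤ a ≤ n−1 be integers. Let P = ℂ⟦u₁,…,uₙ⟧ and let J be the ideal generated by g_j := a·u_j^{a−1} − ∏_{k≠j} u_k for j = 1,…,n. Then for a polynomial p ∈ ℂ[T], the element p(u₁^a) lies in J if and only if T^{a−1} divides p. Equivalently, the kernel of the ℂ-algebra homomorphism ℂ[T] → P/J sending T to the class of u₁^a is the ideal generated by T^{a−1}. -/

import Mathlib

/-- The element `g_j = a·u_j^{a−1} − ∏_{k≠j} u_k` of the formal power series ring
`P = ℂ⟦u₁,…,uₙ⟧`, where `u_j` is `MvPowerSeries.X j`. Up to sign, this is the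
partial derivative `∂Z^n_a/∂u_j` of `Z^n_a = −u₁⋯uₙ + Σ_j u_j^a`. -/
noncomputable def gPow (n a : ℕ) (j : Fin n) : MvPowerSeries (Fin n) ℂ :=
  (a : MvPowerSeries (Fin n) ℂ) * MvPowerSeries.X j ^ (a - 1)
    - ∏ k ∈ Finset.univ.erase j, MvPowerSeries.X k

/-!
Write `π = u₁⋯uₙ` and `ξ = u₁^a`. Since `u_j g_j = a u_j^a - π`, in `P/J` we have `a ξ = π`.
Multiplying the relations `a u_j^{a-1} ≡ ∏_{k≠j} u_k` over all `j` gives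
`π^{a-1} (a^n - π^{n-a}) ∈ J`, and the second factor is a unit because `a < n`; hence
`ξ^{a-1} = 0`. On the other hand `π^{a-2} ∉ J`: the functional `f ↦ a^n Res[f du / (g₁⋯gₙ)]`,
written out as a finite sum of coefficients of `f`, vanishes on `J` and takes the value `1` at
`π^{a-2}`. So `ξ` is nilpotent of order exactly `a - 1`, and the kernel of `T ↦ ξ` is `(T^{a-1})`.
-/

theorem Polynomial.aeval_eq_zero_iff_X_pow_dvd {K R : Type*} [Field K] [CommRing R]
    [Algebra K R] {ξ : R} {k : ℕ} (hk : ξ ^ k = 0) (hk' : ξ ^ (k - 1) ≠ 0) (p : Polynomial K) :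
    aeval ξ p = 0 ↔ X ^ k ∣ p := by
  refine ⟨fun hp => ?_, by rintro ⟨q, rfl⟩; simp [hk]⟩
  suffices ∀ i ≤ k, X ^ i ∣ p from this k le_rfl
  intro i
  induction i with
  | zero => simp
  | succ i ih =>
    intro hi
    obtain ⟨q, rfl⟩ := ih (by omega)
    obtain ⟨m, rfl⟩ : ∃ m, k = m + i + 1 := ⟨k - i - 1, by omega⟩
    -- multiplying `ξ ^ i * q(ξ) = 0` by `ξ ^ m` leaves only the constant term of `q`
    have hq : q.coeff 0 • ξ ^ (m + i) = 0 := by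
      have hexp : ξ ^ m * aeval ξ (X ^ i * q)
          = ξ ^ (m + i + 1) * aeval ξ q.divX + q.coeff 0 • ξ ^ (m + i) := by
        conv_lhs => rw [← X_mul_divX_add q]
        simp only [map_mul, map_add, map_pow, aeval_X, aeval_C, Algebra.smul_def]
        ring
      rwa [hp, mul_zero, hk, zero_mul, zero_add, eq_comm] at hexp
    have hq0 : q.coeff 0 = 0 := by
      by_contra h
      exact hk' (by simpa using (smul_eq_zero_iff_right h).mp hq)
    rw [pow_succ]
    exact mul_dvd_mul_left _ (X_dvd_iff.mpr hq0)

open MvPowerSeries Finset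

theorem Finset.prod_prod_erase_eq_pow {ι M : Type*} [DecidableEq ι] [CommMonoid M]
    (s : Finset ι) (f : ι → M) :
    ∏ j ∈ s, ∏ k ∈ s.erase j, f k = (∏ k ∈ s, f k) ^ (#s - 1) := by
  rw [prod_comm' (t' := s) (s' := fun k => s.erase k) fun j k => by
    simp only [mem_erase]; tauto, ← prod_pow]
  refine prod_congr rfl fun k hk => ?_
  rw [prod_const, card_erase_of_mem hk]

theorem Finsupp.finset_sum_single_one_apply {σ : Type*} [DecidableEq σ] (s : Finset σ) (i : σ) :
    (∑ k ∈ s, Finsupp.single k 1 : σ →₀ ℕ) i = if i ∈ s then 1 else 0 := by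
  simp [Finsupp.finsetSum_apply, Finsupp.single_apply]

theorem MvPowerSeries.prod_X_eq_monomial {σ R : Type*} [CommSemiring R] (s : Finset σ) :
    ∏ k ∈ s, (X k : MvPowerSeries σ R) = monomial (∑ k ∈ s, Finsupp.single k 1) 1 := by
  simp_rw [X_def]
  rw [prod_monomial, prod_const_one]

namespace JacobianRing

section Residue

variable {K : Type*} [Field K] {n a : ℕ}

/- `residue K n a f` is `a^n Res[f du / (g₁⋯gₙ)]`. Expanding
`1 / g_k = a⁻¹ u_k^{1-a} ∑_{c_k} (π / (a u_k^a))^{c_k}` with `π = u₁⋯uₙ`, the term indexed by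
`c : Fin n → ℕ` contributes `a^{-|c|}` times the coefficient of `u^{a c + (a - 2) - |c|}` in `f`.
`residueIndex` collects the `c` for which this exponent is nonnegative (so the truncated
subtraction in `residueExponent` is exact there); for `a < n` they satisfy `c ≤ n (a - 2)`. -/
noncomputable def residueExponent (a : ℕ) (c : Fin n → ℕ) : Fin n →₀ ℕ :=
  Finsupp.equivFunOnFinite.symm fun k => a * c k + (a - 2) - ∑ i, c i

def residueIndex (n a : ℕ) : Finset (Fin n → ℕ) :=
  {c ∈ Iic fun _ => n * (a - 2) | ∀ k, ∑ i, c i ≤ a * c k + (a - 2)}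

noncomputable def residue (K : Type*) [Field K] (n a : ℕ) : MvPowerSeries (Fin n) K →ₗ[K] K :=
  ∑ c ∈ residueIndex n a, ((a : K)⁻¹ ^ ∑ i, c i) • coeff (residueExponent a c)

@[simp]
theorem residueExponent_apply (c : Fin n → ℕ) (k : Fin n) :
    residueExponent a c k = a * c k + (a - 2) - ∑ i, c i := rfl

theorem residue_apply (f : MvPowerSeries (Fin n) K) :
    residue K n a f =
      ∑ c ∈ residueIndex n a, (a : K)⁻¹ ^ (∑ i, c i) * coeff (residueExponent a c) f := by
  simp [residue]

theorem mem_residueIndex (han : a < n) {c : Fin n → ℕ} :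
    c ∈ residueIndex n a ↔ ∀ k, ∑ i, c i ≤ a * c k + (a - 2) := by
  refine ⟨fun h => (mem_filter.mp h).2, fun h => mem_filter.mpr ⟨mem_Iic.mpr fun k => ?_, h⟩⟩
  have hsum : n * ∑ i, c i ≤ a * ∑ i, c i + n * (a - 2) := by
    simpa [sum_add_distrib, mul_sum] using sum_le_sum fun k (_ : k ∈ univ) => h k
  calc c k ≤ ∑ i, c i := single_le_sum (fun i _ => Nat.zero_le (c i)) (mem_univ k)
    _ ≤ n * (a - 2) := by nlinarith [Nat.mul_le_mul_right (∑ i, c i) (Nat.succ_le_of_lt han)]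

theorem residue_mul_monomial (h : MvPowerSeries (Fin n) K) (μ : Fin n →₀ ℕ) :
    residue K n a (h * monomial μ 1) = ∑ c ∈ residueIndex n a with μ ≤ residueExponent a c,
      (a : K)⁻¹ ^ (∑ i, c i) * coeff (residueExponent a c - μ) h := by
  simp [residue_apply, coeff_mul_monomial, sum_filter]

theorem sum_add_single (c : Fin n → ℕ) (j : Fin n) :
    ∑ i, (c + Pi.single j 1 : Fin n → ℕ) i = ∑ i, c i + 1 := by
  simp [sum_add_distrib]

theorem mul_add_single_apply (c : Fin n → ℕ) (j k : Fin n) :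
    a * (c + Pi.single j 1 : Fin n → ℕ) k = a * c k + if k = j then a else 0 := by
  simp [Pi.single_apply, mul_add]

theorem add_single_mem_iff (ha : 2 ≤ a) (han : a < n) (c : Fin n → ℕ) (j : Fin n) :
    (c + Pi.single j 1 ∈ residueIndex n a ∧
        Finsupp.single j (a - 1) ≤ residueExponent a (c + Pi.single j 1)) ↔
      (c ∈ residueIndex n a ∧ ∑ k ∈ univ.erase j, Finsupp.single k 1 ≤ residueExponent a c) := by
  rw [Finsupp.single_le_iff]
  simp only [mem_residueIndex han, Finsupp.le_def, residueExponent_apply,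
    sum_add_single, mul_add_single_apply, Finsupp.finset_sum_single_one_apply, mem_erase,
    mem_univ, and_true, ↓reduceIte]
  constructor
  · rintro ⟨h1, h2⟩
    refine ⟨fun k => ?_, fun k => ?_⟩ <;> have hk := h1 k <;> rcases eq_or_ne k j with rfl | hkj
    all_goals simp only [ne_eq, not_true_eq_false, not_false_eq_true, ↓reduceIte, *] at hk ⊢; omega
  · rintro ⟨h1, h2⟩
    refine ⟨fun k => ?_, by have := h1 j; omega⟩
    have hk := h1 k
    have hk' := h2 k
    rcases eq_or_ne k j with rfl | hkj
    all_goals simp only [ne_eq, not_true_eq_false, not_false_eq_true, ↓reduceIte, *] at hk' ⊢; omega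

theorem residueExponent_add_single_sub (ha : 2 ≤ a) {c : Fin n → ℕ}
    (hc : ∀ k, ∑ i, c i ≤ a * c k + (a - 2)) (j : Fin n) :
    residueExponent a (c + Pi.single j 1) - Finsupp.single j (a - 1)
      = residueExponent a c - ∑ k ∈ univ.erase j, Finsupp.single k 1 := by
  ext k
  have := hc k
  simp only [Finsupp.tsub_apply, residueExponent_apply, sum_add_single, mul_add_single_apply,
    Finsupp.finset_sum_single_one_apply, Finsupp.single_apply, mem_erase, mem_univ, and_true]
  rcases eq_or_ne k j with rfl | hkj
  · simp only [↓reduceIte, ne_eq, not_true_eq_false]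
    omega
  · simp only [hkj, hkj.symm, ↓reduceIte, ne_eq, not_false_eq_true]
    omega

theorem ne_zero_of_single_le_residueExponent (ha : 2 ≤ a) {c : Fin n → ℕ} {j : Fin n}
    (h : Finsupp.single j (a - 1) ≤ residueExponent a c) : c j ≠ 0 := by
  rw [Finsupp.single_le_iff, residueExponent_apply] at h
  intro h0
  rw [h0, mul_zero, zero_add] at h
  omega

theorem sub_single_add_single {c : Fin n → ℕ} {j : Fin n} (hc : c j ≠ 0) :
    c - Pi.single j 1 + Pi.single j 1 = c := by
  ext k
  rcases eq_or_ne k j with rfl | hkj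
  · simp only [Pi.add_apply, Pi.sub_apply, Pi.single_eq_same]
    omega
  · simp [hkj]

/- The term `c` of the right-hand side matches the term `c + e_j` of the left-hand side. -/
theorem natCast_mul_residue_mul_X_pow (ha : 2 ≤ a) (han : a < n) (haK : (a : K) ≠ 0)
    (h : MvPowerSeries (Fin n) K) (j : Fin n) :
    (a : K) * residue K n a (h * X j ^ (a - 1))
      = residue K n a (h * ∏ k ∈ univ.erase j, X k) := by
  rw [X_pow_eq, prod_X_eq_monomial, residue_mul_monomial, residue_mul_monomial, mul_sum]
  symm
  refine sum_nbij' (· + Pi.single j 1) (· - Pi.single j 1) (fun c hc => ?_) (fun c hc => ?_)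
    (fun c _ => add_tsub_cancel_right c _) (fun c hc => ?_) (fun c hc => ?_)
  · rw [mem_filter] at hc ⊢
    exact (add_single_mem_iff ha han c j).2 hc
  · rw [mem_filter] at hc ⊢
    rw [← sub_single_add_single (ne_zero_of_single_le_residueExponent ha hc.2)] at hc
    exact (add_single_mem_iff ha han _ j).1 hc
  · rw [mem_filter] at hc
    exact sub_single_add_single (ne_zero_of_single_le_residueExponent ha hc.2)
  · rw [mem_filter, mem_residueIndex han] at hc
    rw [sum_add_single, residueExponent_add_single_sub ha hc.1, pow_succ]
    field_simp

theorem eq_zero_of_residueExponent_eq_const (ha : 2 ≤ a) (han : a < n) {c : Fin n → ℕ}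
    (hc : c ∈ residueIndex n a)
    (hw : residueExponent a c = (a - 2) • ∑ k, Finsupp.single k 1) : c = 0 := by
  have hk : ∀ k, a * c k = ∑ i, c i := fun k => by
    have h1 := (mem_residueIndex han).1 hc k
    have h2 := DFunLike.congr_fun hw k
    simp only [residueExponent_apply, Finsupp.smul_apply, Finsupp.finset_sum_single_one_apply,
      mem_univ, if_true, smul_eq_mul, mul_one] at h2
    omega
  have hsum : a * ∑ i, c i = n * ∑ i, c i := by simp [mul_sum, hk]
  have h0 : ∑ i, c i = 0 := by
    by_contra h
    exact han.ne (Nat.eq_of_mul_eq_mul_right (Nat.pos_of_ne_zero h) hsum)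
  funext k
  have := hk k
  rw [h0, mul_eq_zero] at this
  exact this.resolve_left (by omega)

theorem residue_prod_X_pow (ha : 2 ≤ a) (han : a < n) :
    residue K n a ((∏ k, X k) ^ (a - 2)) = 1 := by
  have h0 : (0 : Fin n → ℕ) ∈ residueIndex n a := (mem_residueIndex han).2 fun k => by simp
  rw [prod_X_eq_monomial, monomial_pow, one_pow, residue_apply, sum_eq_single_of_mem 0 h0]
  · rw [coeff_monomial, if_pos]
    · simp
    · ext k
      simp
  · intro c hc hc0
    rw [coeff_monomial, if_neg (mt (eq_zero_of_residueExponent_eq_const ha han hc) hc0), mul_zero]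

end Residue

variable {n a : ℕ}

noncomputable abbrev jacobianIdeal (n a : ℕ) : Ideal (MvPowerSeries (Fin n) ℂ) :=
  Ideal.span (Set.range (gPow n a))

theorem residue_eq_zero_of_mem_jacobianIdeal (ha : 2 ≤ a) (han : a < n)
    {f : MvPowerSeries (Fin n) ℂ} (hf : f ∈ jacobianIdeal n a) : residue ℂ n a f = 0 := by
  obtain ⟨c, rfl⟩ := Ideal.mem_span_range_iff_exists_fun.mp hf
  refine (map_sum _ _ _).trans (sum_eq_zero fun j _ => ?_)
  have haC : (a : ℂ) ≠ 0 := by exact_mod_cast (by omega : a ≠ 0)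
  rw [gPow, mul_sub, mul_left_comm, ← nsmul_eq_mul, map_sub, map_nsmul, nsmul_eq_mul,
    natCast_mul_residue_mul_X_pow ha han haC, sub_self]

theorem prod_X_pow_sub_two_notMem_jacobianIdeal (ha : 2 ≤ a) (han : a < n) :
    (∏ k, X k) ^ (a - 2) ∉ jacobianIdeal n a := fun h =>
  one_ne_zero <|
    (residue_prod_X_pow ha han).symm.trans (residue_eq_zero_of_mem_jacobianIdeal ha han h)

theorem natCast_mul_X_pow_sub_prod_mem_jacobianIdeal (ha : 1 ≤ a) (j : Fin n) :
    (a : MvPowerSeries (Fin n) ℂ) * X j ^ a - ∏ k, X k ∈ jacobianIdeal n a := by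
  have h : X j * gPow n a j = (a : MvPowerSeries (Fin n) ℂ) * X j ^ a - ∏ k, X k := by
    have hX : (X j : MvPowerSeries (Fin n) ℂ) ^ a = X j * X j ^ (a - 1) := by
      rw [← pow_succ', Nat.sub_add_cancel ha]
    rw [gPow, ← mul_prod_erase univ X (mem_univ j), hX]
    ring
  rw [← h]
  exact Ideal.mul_mem_left _ _ (Ideal.subset_span ⟨j, rfl⟩)

theorem prod_X_pow_pred_mem_jacobianIdeal (ha : 1 ≤ a) (han : a < n) :
    (∏ k, X k) ^ (a - 1) ∈ jacobianIdeal n a := by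
  set π : MvPowerSeries (Fin n) ℂ := ∏ k, X k
  have hrel :
      (a : MvPowerSeries (Fin n) ℂ) ^ n * π ^ (a - 1) - π ^ (n - 1) ∈ jacobianIdeal n a := by
    have h1 : (a : MvPowerSeries (Fin n) ℂ) ^ n * π ^ (a - 1)
        = ∏ j, (a : MvPowerSeries (Fin n) ℂ) * X j ^ (a - 1) := by
      rw [prod_mul_distrib, prod_const, card_univ, Fintype.card_fin, prod_pow]
    have h2 : π ^ (n - 1) = ∏ j, ∏ k ∈ univ.erase j, X k := by
      rw [prod_prod_erase_eq_pow, card_univ, Fintype.card_fin]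
    rw [← Ideal.Quotient.eq, h1, h2, map_prod, map_prod]
    exact prod_congr rfl fun j _ => Ideal.Quotient.eq.mpr (Ideal.subset_span ⟨j, rfl⟩)
  have hunit : IsUnit ((a : MvPowerSeries (Fin n) ℂ) ^ n - π ^ (n - a)) := by
    have hπ : constantCoeff π = 0 := by
      simp [π, map_prod, prod_eq_zero (mem_univ (⟨0, by omega⟩ : Fin n))]
    rw [isUnit_iff_constantCoeff, map_sub, map_pow, map_pow, hπ, zero_pow (by omega), sub_zero,
      map_natCast]
    exact (pow_ne_zero _ (by exact_mod_cast (by omega : a ≠ 0))).isUnit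
  rw [← Ideal.mul_unit_mem_iff_mem _ hunit]
  convert hrel using 1
  rw [mul_sub, ← pow_add, show a - 1 + (n - a) = n - 1 by omega]
  ring

theorem X_pow_pow_mem_jacobianIdeal_iff (ha : 1 ≤ a) (j : Fin n) (m : ℕ) :
    (X j ^ a) ^ m ∈ jacobianIdeal n a ↔ (∏ k, X k) ^ m ∈ jacobianIdeal n a := by
  have haC : (a : ℂ) ≠ 0 := by exact_mod_cast (by omega : a ≠ 0)
  set mk := Ideal.Quotient.mkₐ ℂ (jacobianIdeal n a)
  have h : mk (X j ^ a) = (a : ℂ)⁻¹ • mk (∏ k, X k) := by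
    rw [eq_inv_smul_iff₀ haC, ← map_smul, Nat.cast_smul_eq_nsmul, nsmul_eq_mul]
    exact Ideal.Quotient.eq.mpr (natCast_mul_X_pow_sub_prod_mem_jacobianIdeal ha j)
  rw [← Ideal.Quotient.eq_zero_iff_mem, ← Ideal.Quotient.eq_zero_iff_mem,
    ← Ideal.Quotient.mkₐ_eq_mk ℂ, map_pow mk (X j ^ a), map_pow mk (∏ k, X k), h, smul_pow,
    smul_eq_zero_iff_right (pow_ne_zero _ (inv_ne_zero haC))]

end JacobianRing

open JacobianRing in
/-- For `n ≥ 4` and `2 ≤ a ≤ n−1`, in `P = ℂ⟦u₁,…,uₙ⟧` with `J` the ideal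
generated by `g₁,…,gₙ`: for a polynomial `p ∈ ℂ[T]`, the element `p(u₁^a)` lies in `J`
iff `T^{a−1}` divides `p`.  (Equivalently, the kernel of `ℂ[T] → P/J`, `T ↦ [u₁^a]`, is
the ideal `(T^{a−1})`.) -/
theorem kernel_of_polynomial_map_to_power_series_jacobian_ring
    (n a : ℕ) (ha : 2 ≤ a) (han : a ≤ n - 1) (p : Polynomial ℂ) :
    Polynomial.aeval
        ((MvPowerSeries.X (⟨0, by omega⟩ : Fin n) : MvPowerSeries (Fin n) ℂ) ^ a) p
        ∈ Ideal.span (Set.range (gPow n a))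
      ↔ Polynomial.X ^ (a - 1) ∣ p := by
  have han' : a < n := by omega
  set ξ := Ideal.Quotient.mkₐ ℂ (jacobianIdeal n a) (X ⟨0, by omega⟩ ^ a)
  have hξ : ∀ m, ξ ^ m = 0 ↔ (∏ k, X k) ^ m ∈ jacobianIdeal n a := fun m => by
    rw [← map_pow, Ideal.Quotient.mkₐ_eq_mk, Ideal.Quotient.eq_zero_iff_mem,
      X_pow_pow_mem_jacobianIdeal_iff (by omega)]
  have h1 : ξ ^ (a - 1) = 0 := (hξ _).2 (prod_X_pow_pred_mem_jacobianIdeal (by omega) han')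
  have h2 : ξ ^ (a - 1 - 1) ≠ 0 :=
    fun h => prod_X_pow_sub_two_notMem_jacobianIdeal ha han' ((hξ _).1 h)
  rw [← Ideal.Quotient.eq_zero_iff_mem, ← Ideal.Quotient.mkₐ_eq_mk ℂ,
    ← Polynomial.aeval_algHom_apply]
  exact Polynomial.aeval_eq_zero_iff_X_pow_dvd h1 h2 p
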